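/- arXiv:2604.23652 — 2 statements merged into one kernel-verified Lean document; each statement's English description precedes it below -/
import Mathlib

section
/- Let γ ≥ 1 and Π as above. For every ρ ≥ 4 one has Π(ρ) ≥ c(γ) ρ^γ, where c(γ) = Π(4)/4^γ, i.e. c(γ) = log 4 - 3/4 if γ = 1 and c(γ) = (4^γ - 1 - 3γ)/((γ-1) 4^γ) if γ > 1. Moreover c(γ) > 0. -/
/-- The relative internal energy density. -/
noncomputable def relEnergy (γ : ℝ) (ρ : ℝ) : ℝ :=
  if γ = 1 then ρ * Real.log ρ - ρ + 1
  else (ρ ^ γ - 1 - γ * (ρ - 1)) / (γ - 1)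

/-- The coercivity constant `c(γ) = Π(4)/4^γ`. -/
noncomputable def cHigh (γ : ℝ) : ℝ :=
  if γ = 1 then Real.log 4 - 3 / 4
  else ((4 : ℝ) ^ γ - 1 - 3 * γ) / ((γ - 1) * (4 : ℝ) ^ γ)

/-! The ratio `Π(ρ) / ρ^γ` is nondecreasing on `[1, ∞)`; evaluating it at `ρ = 4` gives the bound.
For `γ > 1` the comparison of the ratio at `a ≤ ρ` reduces, after writing `ρ = a t`, to Bernoulli's
inequality `t^γ ≥ 1 + γ (t - 1)`; for `γ = 1` it is `log t ≥ 1 - 1/t`. Positivity of `c(γ)` is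
the strict positivity of `Π` away from `ρ = 1`. -/

open Real Set

theorem cHigh_eq_relEnergy_div (γ : ℝ) : cHigh γ = relEnergy γ 4 / (4 : ℝ) ^ γ := by
  unfold cHigh relEnergy
  split_ifs with hγ
  · subst hγ
    rw [rpow_one]
    ring
  · rw [div_div]
    ring_nf

theorem relEnergy_pos {γ ρ : ℝ} (hγ : 1 ≤ γ) (hρ : 0 < ρ) (hρ1 : ρ ≠ 1) : 0 < relEnergy γ ρ := by
  unfold relEnergy
  split_ifs with hγ1
  · have hlog := log_lt_sub_one_of_pos (inv_pos.mpr hρ) (inv_ne_one.mpr hρ1)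
    rw [log_inv] at hlog
    have := mul_lt_mul_of_pos_left hlog hρ
    rw [mul_sub, mul_inv_cancel₀ hρ.ne'] at this
    linarith
  · have hγ1 : 1 < γ := lt_of_le_of_ne hγ (Ne.symm hγ1)
    have hbern := one_add_mul_self_lt_rpow_one_add (s := ρ - 1) (by linarith) (sub_ne_zero.mpr hρ1) hγ1
    rw [add_sub_cancel] at hbern
    exact div_pos (by linarith) (by linarith)

theorem one_add_mul_sub_one_mul_rpow_le {γ a ρ : ℝ} (hγ : 1 ≤ γ) (ha : 1 ≤ a) (haρ : a ≤ ρ) :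
    (1 + γ * (ρ - 1)) * a ^ γ ≤ (1 + γ * (a - 1)) * ρ ^ γ := by
  have ha0 : 0 < a := by linarith
  set t := ρ / a
  have ht : 1 ≤ t := (one_le_div ha0).mpr haρ
  have hρ : ρ = a * t := (mul_div_cancel₀ ρ ha0.ne').symm
  have hbern : 1 + γ * (t - 1) ≤ t ^ γ := by
    simpa using one_add_mul_self_le_rpow_one_add (s := t - 1) (by linarith) hγ
  have hsplit : ρ ^ γ = a ^ γ * t ^ γ := by rw [hρ, mul_rpow ha0.le (by linarith)]
  have haγ : 0 < a ^ γ := rpow_pos_of_pos ha0 γ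
  -- `a t - 1 = (a - 1) + (t - 1) + (a - 1)(t - 1)` and `γ ≤ γ²` absorb the cross term
  have hcross : 1 + γ * (ρ - 1) ≤ (1 + γ * (a - 1)) * (1 + γ * (t - 1)) := by
    rw [hρ]
    nlinarith [mul_nonneg (mul_nonneg (sub_nonneg.mpr hγ) (sub_nonneg.mpr ha)) (sub_nonneg.mpr ht)]
  calc (1 + γ * (ρ - 1)) * a ^ γ
      ≤ (1 + γ * (a - 1)) * (1 + γ * (t - 1)) * a ^ γ := by gcongr
    _ ≤ (1 + γ * (a - 1)) * t ^ γ * a ^ γ := by gcongr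
    _ = (1 + γ * (a - 1)) * ρ ^ γ := by rw [hsplit]; ring

theorem relEnergy_mul_rpow_le {γ a ρ : ℝ} (hγ : 1 ≤ γ) (ha : 1 ≤ a) (haρ : a ≤ ρ) :
    relEnergy γ a * ρ ^ γ ≤ relEnergy γ ρ * a ^ γ := by
  have ha0 : 0 < a := by linarith
  have hρ0 : 0 < ρ := by linarith
  unfold relEnergy
  split_ifs with hγ1
  · subst hγ1
    simp only [rpow_one]
    have hlog := log_le_sub_one_of_pos (div_pos ha0 hρ0)
    rw [log_div ha0.ne' hρ0.ne'] at hlog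
    have := mul_le_mul_of_nonneg_left hlog (mul_pos ha0 hρ0).le
    rw [show a * ρ * (a / ρ - 1) = a * a - a * ρ by field_simp] at this
    nlinarith [mul_nonneg (sub_nonneg.mpr ha) (sub_nonneg.mpr haρ)]
  · have hγ1 : 0 < γ - 1 := sub_pos.mpr (lt_of_le_of_ne hγ (Ne.symm hγ1))
    rw [div_mul_eq_mul_div, div_mul_eq_mul_div, div_le_div_iff_of_pos_right hγ1]
    linarith [one_add_mul_sub_one_mul_rpow_le hγ ha haρ]

theorem relEnergy_div_rpow_monotoneOn {γ : ℝ} (hγ : 1 ≤ γ) :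
    MonotoneOn (fun ρ => relEnergy γ ρ / ρ ^ γ) (Ici 1) := by
  intro a ha ρ _ haρ
  have ha0 : 0 < a := lt_of_lt_of_le one_pos ha
  rw [div_le_div_iff₀ (rpow_pos_of_pos ha0 γ) (rpow_pos_of_pos (ha0.trans_le haρ) γ)]
  exact relEnergy_mul_rpow_le hγ ha haρ

theorem stmt_3 (γ : ℝ) (hγ : 1 ≤ γ) :
    cHigh γ = relEnergy γ 4 / (4 : ℝ) ^ γ ∧
    0 < cHigh γ ∧
    ∀ ρ : ℝ, 4 ≤ ρ → cHigh γ * ρ ^ γ ≤ relEnergy γ ρ := by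
  refine ⟨cHigh_eq_relEnergy_div γ, ?_, fun ρ hρ => ?_⟩
  · rw [cHigh_eq_relEnergy_div]
    exact div_pos (relEnergy_pos hγ four_pos (by norm_num)) (rpow_pos_of_pos four_pos γ)
  · have hρ0 : 0 < ρ ^ γ := rpow_pos_of_pos (by linarith) γ
    have hmono := relEnergy_div_rpow_monotoneOn hγ (by norm_num : (4 : ℝ) ∈ Ici 1)
      (show ρ ∈ Ici 1 from le_trans (by norm_num) hρ) hρ
    rw [cHigh_eq_relEnergy_div, ← le_div_iff₀ hρ0]
    exact hmono
end

section
/- Fix N ∈ {2,3} and real numbers ν > 0, c with 0 < 2ν - c ≤ c, and α with (N-1)/N < α < 1. For any N×N real matrix A define Q(A) = ν|A|² + (ν - c)(A : Aᵀ) + (α-1)(2ν-c)(tr A)², where A : B = Σ A_{ij} B_{ij} and |A|² = A : A. Then Q(A) ≥ (2ν - c)(Nα - N + 1)|A|² for all A. -/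
/-!
Write `S = A : A`, `T = A : Aᵀ` and `μ = (2ν - c)(Nα - N + 1)`. Then
`Q(A) - μ S = (1 - α)(2ν - c) (N (S + T) / 2 - (tr A)²) + (c - μ) (S - T) / 2`
identically, because `(1 - α)(2ν - c) N = (2ν - c) - μ`. Both terms are nonnegative:
`S - T = ½ |A - Aᵀ|²`, and `S + T = ½ |A + Aᵀ|²` dominates twice the squared diagonal,
which by Cauchy–Schwarz dominates `2 (tr A)² / N`; finally `μ ≤ 2ν - c ≤ c` as `α < 1`.
-/

open Finset

namespace Matrix

variable {ι : Type*} [Fintype ι] (A : Matrix ι ι ℝ)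

lemma sum_sum_add_transpose_sq :
    ∑ i, ∑ j, (A i j + A j i) ^ 2
      = 2 * ((∑ i, ∑ j, A i j * A i j) + ∑ i, ∑ j, A i j * A j i) := by
  have hswap : ∑ i, ∑ j, A j i * A j i = ∑ i, ∑ j, A i j * A i j := sum_comm
  calc ∑ i, ∑ j, (A i j + A j i) ^ 2
      = ∑ i, ∑ j, (A i j * A i j + A j i * A j i + 2 * (A i j * A j i)) :=
        sum_congr rfl fun _ _ ↦ sum_congr rfl fun _ _ ↦ by ring
    _ = _ := by simp only [sum_add_distrib, ← mul_sum, hswap]; ring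

lemma sum_sum_sub_transpose_sq :
    ∑ i, ∑ j, (A i j - A j i) ^ 2
      = 2 * ((∑ i, ∑ j, A i j * A i j) - ∑ i, ∑ j, A i j * A j i) := by
  have hswap : ∑ i, ∑ j, A j i * A j i = ∑ i, ∑ j, A i j * A i j := sum_comm
  calc ∑ i, ∑ j, (A i j - A j i) ^ 2
      = ∑ i, ∑ j, (A i j * A i j + A j i * A j i - 2 * (A i j * A j i)) :=
        sum_congr rfl fun _ _ ↦ sum_congr rfl fun _ _ ↦ by ring
    _ = _ := by simp only [sum_add_distrib, sum_sub_distrib, ← mul_sum, hswap]; ring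

lemma sum_sum_mul_transpose_le :
    ∑ i, ∑ j, A i j * A j i ≤ ∑ i, ∑ j, A i j * A i j := by
  have h : 0 ≤ ∑ i, ∑ j, (A i j - A j i) ^ 2 := by positivity
  rw [sum_sum_sub_transpose_sq] at h
  linarith

lemma two_mul_sum_diag_sq_le :
    2 * ∑ i, A i i ^ 2 ≤ (∑ i, ∑ j, A i j * A i j) + ∑ i, ∑ j, A i j * A j i := by
  have hdiag : ∑ i, (A i i + A i i) ^ 2 ≤ ∑ i, ∑ j, (A i j + A j i) ^ 2 :=
    sum_le_sum fun i _ ↦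
      single_le_sum (f := fun j ↦ (A i j + A j i) ^ 2) (fun _ _ ↦ sq_nonneg _) (mem_univ i)
  have hdouble : ∑ i, (A i i + A i i) ^ 2 = 4 * ∑ i, A i i ^ 2 := by
    rw [mul_sum]; exact sum_congr rfl fun _ _ ↦ by ring
  rw [hdouble, sum_sum_add_transpose_sq] at hdiag
  linarith

lemma two_mul_trace_sq_le :
    2 * A.trace ^ 2
      ≤ Fintype.card ι * ((∑ i, ∑ j, A i j * A i j) + ∑ i, ∑ j, A i j * A j i) := by
  have hcs : A.trace ^ 2 ≤ Fintype.card ι * ∑ i, A i i ^ 2 := by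
    simpa [trace] using sq_sum_le_card_mul_sum_sq (s := univ) (f := fun i ↦ A i i)
  nlinarith [two_mul_sum_diag_sq_le A, (Nat.cast_nonneg (Fintype.card ι) : (0 : ℝ) ≤ _)]

end Matrix

theorem stmt_4_general (N : ℕ) (ν c α : ℝ)
    (hc1 : 0 < 2 * ν - c) (hc2 : 2 * ν - c ≤ c)
    (hα2 : α < 1)
    (A : Matrix (Fin N) (Fin N) ℝ) :
    (2 * ν - c) * ((N : ℝ) * α - N + 1) * (∑ i, ∑ j, A i j * A i j) ≤
      ν * (∑ i, ∑ j, A i j * A i j)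
        + (ν - c) * (∑ i, ∑ j, A i j * A j i)
        + (α - 1) * (2 * ν - c) * (Matrix.trace A) ^ 2 := by
  set S := ∑ i, ∑ j, A i j * A i j
  set T := ∑ i, ∑ j, A i j * A j i
  set μ := (2 * ν - c) * ((N : ℝ) * α - N + 1)
  have hTS : T ≤ S := A.sum_sum_mul_transpose_le
  have htrace : 2 * A.trace ^ 2 ≤ N * (S + T) := by simpa using A.two_mul_trace_sq_le
  have hμ : μ ≤ c := by
    nlinarith [mul_nonneg (mul_nonneg hc1.le (Nat.cast_nonneg N)) (sub_nonneg.2 hα2.le)]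
  linarith [mul_nonneg (mul_nonneg (sub_nonneg.2 hα2.le) hc1.le) (sub_nonneg.2 htrace),
    mul_nonneg (sub_nonneg.2 hμ) (sub_nonneg.2 hTS)]

theorem stmt_4 (N : ℕ) (hN : N = 2 ∨ N = 3) (ν c α : ℝ) (hν : 0 < ν)
    (hc1 : 0 < 2 * ν - c) (hc2 : 2 * ν - c ≤ c)
    (hα1 : ((N : ℝ) - 1) / N < α) (hα2 : α < 1)
    (A : Matrix (Fin N) (Fin N) ℝ) :
    (2 * ν - c) * ((N : ℝ) * α - N + 1) * (∑ i, ∑ j, A i j * A i j) ≤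
      ν * (∑ i, ∑ j, A i j * A i j)
        + (ν - c) * (∑ i, ∑ j, A i j * A j i)
        + (α - 1) * (2 * ν - c) * (Matrix.trace A) ^ 2 :=
  stmt_4_general N ν c α hc1 hc2 hα2 A
end
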